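/- For an odd prime p, n ≥ 1, u a unit of ℤ/pⁿℤ and 0 < k < n with n - k ≤ k: the Γ₀(ℤ/pⁿℤ)-orbit of the unimodular pair (1, u·p^k) has exactly φ(pⁿ) elements; if instead k < n - k, the orbit has φ(pⁿ)·p^{n-2k} elements. -/

import Mathlib

open Matrix

/-- The Borel subgroup `Γ₀(R)` of upper triangular matrices in `SL₂(R)`. -/
def Gamma0 (R : Type*) [CommRing R] : Subgroup (Matrix.SpecialLinearGroup (Fin 2) R) where
  carrier := {A | A.1 1 0 = 0}
  one_mem' := by simp [Matrix.one_apply]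
  mul_mem' := by
    intro a b ha hb
    simp only [Set.mem_setOf_eq] at *
    have : ((a * b : Matrix.SpecialLinearGroup (Fin 2) _)).1 1 0
        = a.1 1 0 * b.1 0 0 + a.1 1 1 * b.1 1 0 := by
      simp [Matrix.mul_apply, Fin.sum_univ_two]
    rw [this, ha, hb]; ring
  inv_mem' := by
    intro a ha
    simp only [Set.mem_setOf_eq] at *
    rw [Matrix.SpecialLinearGroup.SL2_inv_expl]
    simp [ha]

/-- A pair is unimodular (over a local ring) if one of its entries is a unit. -/
def IsUnimodular {R : Type*} [CommRing R] (v : Fin 2 → R) : Prop :=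
  IsUnit (v 0) ∨ IsUnit (v 1)

def P1Setoid (R : Type*) [CommRing R] : Setoid {v : Fin 2 → R // IsUnimodular v} where
  r x y := ∃ u : Rˣ, u • x.1 = y.1
  iseqv := by
    refine ⟨fun x => ⟨1, one_smul _ _⟩, ?_, ?_⟩
    · rintro x y ⟨u, h⟩
      exact ⟨u⁻¹, by rw [← h, inv_smul_smul]⟩
    · rintro x y z ⟨u, h⟩ ⟨w, h2⟩
      exact ⟨w * u, by rw [← h2, ← h]; exact (smul_smul w u x.1).symm ▸ rfl⟩

/-- The projective line over `R`: unimodular pairs up to unit scaling. -/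
def P1 (R : Type*) [CommRing R] := Quotient (P1Setoid R)

def P1.mk {R : Type*} [CommRing R] (v : Fin 2 → R) (h : IsUnimodular v) : P1 R :=
  Quotient.mk (P1Setoid R) ⟨v, h⟩

theorem isUnimodular_mulVec {R : Type*} [CommRing R] [IsLocalRing R]
    (g : Matrix.SpecialLinearGroup (Fin 2) R) {v : Fin 2 → R} (hv : IsUnimodular v) :
    IsUnimodular (g.1.mulVec v) := by
  by_contra h
  rw [IsUnimodular, not_or] at h
  obtain ⟨h0, h1⟩ := h
  have hv' : v = (g⁻¹).1.mulVec (g.1.mulVec v) := by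
    rw [Matrix.mulVec_mulVec, ← Matrix.SpecialLinearGroup.coe_mul, inv_mul_cancel]
    simp
  have key : ∀ i, ¬ IsUnit (v i) := by
    intro i
    rw [hv']
    have hexp : (g⁻¹).1.mulVec (g.1.mulVec v) i
        = (g⁻¹).1 i 0 * (g.1.mulVec v 0) + (g⁻¹).1 i 1 * (g.1.mulVec v 1) := by
      simp [Matrix.mulVec, dotProduct, Fin.sum_univ_two]
    rw [hexp]
    intro hu
    have m0 : (g⁻¹).1 i 0 * (g.1.mulVec v 0) ∈ nonunits R := by
      intro hc
      exact h0 (isUnit_of_mul_isUnit_right hc)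
    have m1 : (g⁻¹).1 i 1 * (g.1.mulVec v 1) ∈ nonunits R := by
      intro hc
      exact h1 (isUnit_of_mul_isUnit_right hc)
    exact (IsLocalRing.nonunits_add m0 m1) hu
  rcases hv with h | h
  · exact key 0 h
  · exact key 1 h

noncomputable instance P1.smul {R : Type*} [CommRing R] [IsLocalRing R] :
    SMul (Matrix.SpecialLinearGroup (Fin 2) R) (P1 R) where
  smul g := Quotient.map
    (fun v => ⟨g.1.mulVec v.1, isUnimodular_mulVec g v.2⟩)
    (by
      rintro x y ⟨u, h⟩
      refine ⟨u, ?_⟩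
      simp only [← h]
      rw [Units.smul_def, Units.smul_def, Matrix.mulVec_smul])

theorem P1.smul_mk {R : Type*} [CommRing R] [IsLocalRing R]
    (g : Matrix.SpecialLinearGroup (Fin 2) R) (v : Fin 2 → R) (h : IsUnimodular v) :
    g • (P1.mk v h) = P1.mk (g.1.mulVec v) (isUnimodular_mulVec g h) := rfl

noncomputable instance P1.mulAction {R : Type*} [CommRing R] [IsLocalRing R] :
    MulAction (Matrix.SpecialLinearGroup (Fin 2) R) (P1 R) where
  one_smul := by
    intro x
    induction x using Quotient.ind with
    | _ v =>
      show Quotient.map _ _ _ = _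
      rw [Quotient.map_mk]
      congr 1
      exact Subtype.ext (by simp)
  mul_smul := by
    intro g h x
    induction x using Quotient.ind with
    | _ v =>
      show Quotient.map _ _ _ = Quotient.map _ _ (Quotient.map _ _ _)
      rw [Quotient.map_mk, Quotient.map_mk, Quotient.map_mk]
      congr 1
      exact Subtype.ext (by simp [Matrix.mul_apply, Fin.sum_univ_two]; constructor <;> ring)

theorem zmod_pow_isUnit_iff (p : ℕ) [hp : Fact p.Prime] (n : ℕ) [NeZero n]
    (x : ZMod (p^n)) : IsUnit x ↔ ¬ (p ∣ x.val) := by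
  haveI : NeZero (p^n) := ⟨pow_ne_zero n hp.out.ne_zero⟩
  conv_lhs => rw [← ZMod.natCast_rightInverse x]
  rw [ZMod.isUnit_iff_coprime]
  rw [Nat.coprime_pow_right_iff (Nat.pos_of_ne_zero (NeZero.ne n))]
  rw [Nat.coprime_comm]
  exact hp.out.coprime_iff_not_dvd

instance zmod_pow_isLocalRing (p : ℕ) [hp : Fact p.Prime] (n : ℕ) [NeZero n] :
    IsLocalRing (ZMod (p^n)) := by
  haveI : NeZero (p^n) := ⟨pow_ne_zero n hp.out.ne_zero⟩
  haveI : Fact (1 < p^n) :=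
    ⟨Nat.one_lt_pow (NeZero.ne n) hp.out.one_lt⟩
  refine IsLocalRing.of_nonunits_add ?_
  intro a b ha hb
  rw [mem_nonunits_iff, zmod_pow_isUnit_iff, not_not] at ha hb ⊢
  rw [ZMod.val_add]
  rw [Nat.dvd_mod_iff (dvd_pow_self p (NeZero.ne n))]
  exact Nat.dvd_add ha hb

theorem isUnimodular_pair_left {R : Type*} [CommRing R] {a b : R} (h : IsUnit a) :
    IsUnimodular ![a, b] := Or.inl (by simpa using h)

theorem isUnimodular_pair_right {R : Type*} [CommRing R] {a b : R} (h : IsUnit b) :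
    IsUnimodular ![a, b] := Or.inr (by simpa using h)

/-- The set of unimodular pairs in `R²`. -/
abbrev F1 (R : Type*) [CommRing R] := {v : Fin 2 → R // IsUnimodular v}

noncomputable instance F1.smul {R : Type*} [CommRing R] [IsLocalRing R] :
    SMul (Matrix.SpecialLinearGroup (Fin 2) R) (F1 R) :=
  ⟨fun g v => ⟨g.1.mulVec v.1, isUnimodular_mulVec g v.2⟩⟩

noncomputable instance F1.mulAction {R : Type*} [CommRing R] [IsLocalRing R] :
    MulAction (Matrix.SpecialLinearGroup (Fin 2) R) (F1 R) where
  one_smul v := Subtype.ext (by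
    show (1 : Matrix.SpecialLinearGroup (Fin 2) R).1.mulVec v.1 = v.1
    simp)
  mul_smul g h v := Subtype.ext (by
    show ((g * h : Matrix.SpecialLinearGroup (Fin 2) R)).1.mulVec v.1
      = g.1.mulVec (h.1.mulVec v.1)
    simp [Matrix.mul_apply, Fin.sum_univ_two]; constructor <;> ring)

/-- The unipotent subgroup `Γ₁(R)` of matrices `(1 b; 0 1)` in `SL₂(R)`. -/
def Gamma1 (R : Type*) [CommRing R] : Subgroup (Matrix.SpecialLinearGroup (Fin 2) R) where
  carrier := {A | A.1 0 0 = 1 ∧ A.1 1 1 = 1 ∧ A.1 1 0 = 0}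
  one_mem' := by simp [Matrix.one_apply]
  mul_mem' := by
    intro a b ha hb
    simp only [Set.mem_setOf_eq] at *
    obtain ⟨ha1, ha2, ha3⟩ := ha
    obtain ⟨hb1, hb2, hb3⟩ := hb
    have e : ∀ i j : Fin 2, ((a * b : Matrix.SpecialLinearGroup (Fin 2) _)).1 i j
        = a.1 i 0 * b.1 0 j + a.1 i 1 * b.1 1 j := by
      intro i j
      simp [Matrix.mul_apply, Fin.sum_univ_two]
    refine ⟨?_, ?_, ?_⟩ <;> rw [e] <;>
      simp [ha1, ha2, ha3, hb1, hb2, hb3]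
  inv_mem' := by
    intro a ha
    simp only [Set.mem_setOf_eq] at *
    obtain ⟨ha1, ha2, ha3⟩ := ha
    rw [Matrix.SpecialLinearGroup.SL2_inv_expl]
    simp [ha1, ha2, ha3]

/-!
An upper triangular `g = (a b; 0 a⁻¹)` over a local ring sends `(1, uπ)` to `(x, a⁻¹uπ)` with
`x = a + buπ` a unit, and `a⁻¹ - x⁻¹ = x⁻¹a⁻¹buπ` lies in `(π)`; so the orbit of `(1, uπ)` is
`{(x, ux⁻¹π + c) | x ∈ Rˣ, c ∈ (π²)}`, in bijection with `Rˣ × (π²)`. Over `ℤ/pⁿℤ` with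
`π = p^k` the ideal `(p^{2k})` has `p^{n-2k}` elements, which is `1` once `n ≤ 2k`.
-/

section Borel

variable {R : Type*} [CommRing R]

def Gamma0.mkUpper (a : Rˣ) (b : R) : Gamma0 R :=
  ⟨⟨!![(a : R), b; 0, ((a⁻¹ : Rˣ) : R)], by simp⟩, rfl⟩

theorem Gamma0.mul_diag_eq_one (g : Gamma0 R) : g.1.1 0 0 * g.1.1 1 1 = 1 := by
  have hdet := g.1.2
  have hg : g.1.1 1 0 = 0 := g.2
  rwa [Matrix.det_fin_two, hg, mul_zero, sub_zero] at hdet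

def borelOrbitParam (u π : R) (z : Rˣ × Ideal.span {π ^ 2}) : F1 R :=
  ⟨![(z.1 : R), u * ((z.1⁻¹ : Rˣ) : R) * π + z.2], isUnimodular_pair_left z.1.isUnit⟩

theorem borelOrbitParam_injective (u π : R) : Function.Injective (borelOrbitParam u π) := by
  rintro ⟨x, c⟩ ⟨y, e⟩ h
  have h0 := congrFun (congrArg Subtype.val h) 0
  have h1 := congrFun (congrArg Subtype.val h) 1
  simp only [borelOrbitParam, Matrix.cons_val_zero, Matrix.cons_val_one] at h0 h1
  obtain rfl : x = y := Units.ext h0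
  exact Prod.ext rfl (Subtype.ext (add_left_cancel h1))

variable [IsLocalRing R]

theorem Gamma0.smul_val (g : Gamma0 R) (v : F1 R) :
    (g • v).1 = ![g.1.1 0 0 * v.1 0 + g.1.1 0 1 * v.1 1, g.1.1 1 1 * v.1 1] := by
  have hg : g.1.1 1 0 = 0 := g.2
  change g.1.1.mulVec v.1 = _
  ext i
  fin_cases i <;> simp [Matrix.mulVec, dotProduct, Fin.sum_univ_two, hg]

theorem isUnit_add_of_mem_maximalIdeal {a x : R} (ha : IsUnit a)
    (hx : x ∈ IsLocalRing.maximalIdeal R) : IsUnit (a + x) := by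
  have hsum : IsUnit ((a + x) + -x) := by rwa [add_neg_cancel_right]
  exact (IsLocalRing.isUnit_or_isUnit_of_isUnit_add hsum).resolve_right
    fun h => hx (by simpa using h)

theorem Gamma0.smul_one_pair_mem_range {u π : R} (hπ : π ∈ IsLocalRing.maximalIdeal R)
    (g : Gamma0 R) :
    g • (⟨![1, u * π], isUnimodular_pair_left isUnit_one⟩ : F1 R) ∈
      Set.range (borelOrbitParam u π) := by
  set a := g.1.1 0 0
  set b := g.1.1 0 1
  set d := g.1.1 1 1
  have had : a * d = 1 := Gamma0.mul_diag_eq_one g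
  have hx : IsUnit (a + b * (u * π)) :=
    isUnit_add_of_mem_maximalIdeal (IsUnit.of_mul_eq_one d had)
      (Ideal.mul_mem_left _ _ (Ideal.mul_mem_left _ _ hπ))
  set x := hx.unit
  have hxv : (x : R) = a + b * (u * π) := hx.unit_spec
  have hxinv : ((x⁻¹ : Rˣ) : R) * x = 1 := x.inv_mul
  refine ⟨(x, ⟨d * (u * π) - u * ((x⁻¹ : Rˣ) : R) * π, ?_⟩), ?_⟩
  · rw [Ideal.mem_span_singleton']
    exact ⟨u ^ 2 * ((x⁻¹ : Rˣ) : R) * b * d, by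
      linear_combination (d * u * π) * hxinv - (d * u * π * ((x⁻¹ : Rˣ) : R)) * hxv
        - (u * π * ((x⁻¹ : Rˣ) : R)) * had⟩
  · apply Subtype.ext
    rw [Gamma0.smul_val]
    ext i
    fin_cases i
    · simp [borelOrbitParam, hxv, a, b]
    · simp [borelOrbitParam, d]

theorem borelOrbitParam_mem_orbit {u π : R} (hu : IsUnit u) (hπ : π ∈ IsLocalRing.maximalIdeal R)
    (z : Rˣ × Ideal.span {π ^ 2}) :
    borelOrbitParam u π z ∈
      MulAction.orbit (Gamma0 R) (⟨![1, u * π], isUnimodular_pair_left isUnit_one⟩ : F1 R) := by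
  obtain ⟨x, c, hc⟩ := z
  obtain ⟨e, rfl⟩ := Ideal.mem_span_singleton'.mp hc
  have hD : IsUnit (((x⁻¹ : Rˣ) : R) + π * (((hu.unit⁻¹ : Rˣ) : R) * e)) :=
    isUnit_add_of_mem_maximalIdeal (x⁻¹).isUnit (Ideal.mul_mem_right _ _ hπ)
  set D := hD.unit
  have hDv : (D : R) = ((x⁻¹ : Rˣ) : R) + π * (((hu.unit⁻¹ : Rˣ) : R) * e) := hD.unit_spec
  have hDinv : ((D⁻¹ : Rˣ) : R) * D = 1 := D.inv_mul
  have hxinv : ((x⁻¹ : Rˣ) : R) * x = 1 := x.inv_mul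
  have huinv : ((hu.unit⁻¹ : Rˣ) : R) * u = 1 := hu.val_inv_mul
  refine ⟨Gamma0.mkUpper D⁻¹ (((D⁻¹ : Rˣ) : R) * x * ((hu.unit⁻¹ : Rˣ) : R) ^ 2 * e), ?_⟩
  apply Subtype.ext
  rw [Gamma0.smul_val]
  ext i
  fin_cases i
  · simp only [Gamma0.mkUpper, borelOrbitParam, inv_inv, of_apply, cons_val', cons_val_zero,
      cons_val_one, cons_val_fin_one, Fin.zero_eta, mul_one]
    linear_combination (x : R) * hDinv - ((D⁻¹ : Rˣ) * x : R) * hDv - ((D⁻¹ : Rˣ) : R) * hxinv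
      + ((D⁻¹ : Rˣ) * x * (hu.unit⁻¹ : Rˣ) * e * π : R) * huinv
  · simp only [Gamma0.mkUpper, borelOrbitParam, inv_inv, of_apply, cons_val', cons_val_zero,
      cons_val_one, cons_val_fin_one, Fin.mk_one, mul_one]
    linear_combination (u * π) * hDv + (e * π ^ 2) * huinv

theorem orbit_one_pair_eq_range {u π : R} (hu : IsUnit u)
    (hπ : π ∈ IsLocalRing.maximalIdeal R) :
    MulAction.orbit (Gamma0 R) (⟨![1, u * π], isUnimodular_pair_left isUnit_one⟩ : F1 R) =
      Set.range (borelOrbitParam u π) := by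
  ext v
  constructor
  · rintro ⟨g, rfl⟩
    exact Gamma0.smul_one_pair_mem_range hπ g
  · rintro ⟨z, rfl⟩
    exact borelOrbitParam_mem_orbit hu hπ z

theorem card_orbit_one_pair {u π : R} (hu : IsUnit u) (hπ : π ∈ IsLocalRing.maximalIdeal R) :
    Nat.card (MulAction.orbit (Gamma0 R)
      (⟨![1, u * π], isUnimodular_pair_left isUnit_one⟩ : F1 R)) =
      Nat.card Rˣ * Nat.card (Ideal.span {π ^ 2}) := by
  rw [orbit_one_pair_eq_range hu hπ, Nat.card_range_of_injective (borelOrbitParam_injective u π),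
    Nat.card_prod]

end Borel

theorem ZMod.card_span_singleton {m : ℕ} (a : ZMod m) :
    Nat.card (Ideal.span {a}) = addOrderOf a := by
  have hspan : ((Ideal.span {a} : Ideal (ZMod m)) : Set (ZMod m)) = AddSubgroup.zmultiples a := by
    ext x
    simp only [SetLike.mem_coe, Ideal.mem_span_singleton', AddSubgroup.mem_zmultiples_iff]
    constructor
    · rintro ⟨r, rfl⟩
      exact ⟨r.cast, by rw [zsmul_eq_mul, ZMod.intCast_zmod_cast]⟩
    · rintro ⟨z, rfl⟩
      exact ⟨z, (zsmul_eq_mul a z).symm⟩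
  rw [← Nat.card_zmultiples]
  exact Nat.card_congr (Equiv.setCongr hspan)

theorem ZMod.card_span_prime_pow (p : ℕ) [hp : Fact p.Prime] (n j : ℕ) :
    Nat.card (Ideal.span {(p : ZMod (p ^ n)) ^ j}) = p ^ (n - j) := by
  rw [ZMod.card_span_singleton, ← Nat.cast_pow, ZMod.addOrderOf_coe _ (pow_ne_zero n hp.out.ne_zero)]
  rcases le_total j n with hjn | hnj
  · rw [Nat.gcd_eq_right (pow_dvd_pow p hjn), Nat.pow_div hjn hp.out.pos]
  · rw [Nat.gcd_eq_left (pow_dvd_pow p hnj), Nat.div_self (pow_pos hp.out.pos n),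
      Nat.sub_eq_zero_of_le hnj, pow_zero]

theorem ZMod.card_orbit_one_pair_prime_pow (p : ℕ) [Fact p.Prime] (n : ℕ) [NeZero n]
    {u : ZMod (p ^ n)} (hu : IsUnit u) {k : ℕ} (hk : 0 < k) :
    Nat.card (MulAction.orbit (Gamma0 (ZMod (p ^ n)))
      (⟨![1, u * (p : ZMod (p ^ n)) ^ k], isUnimodular_pair_left isUnit_one⟩ : F1 (ZMod (p ^ n))))
      = Nat.totient (p ^ n) * p ^ (n - 2 * k) := by
  have hπ : (p : ZMod (p ^ n)) ^ k ∈ IsLocalRing.maximalIdeal (ZMod (p ^ n)) := by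
    rw [IsLocalRing.mem_maximalIdeal, mem_nonunits_iff, isUnit_pow_iff hk.ne',
      ZMod.isUnit_prime_iff_not_dvd Fact.out, not_not]
    exact dvd_pow_self p (NeZero.ne n)
  rw [card_orbit_one_pair hu hπ, ← pow_mul, ZMod.card_span_prime_pow, mul_comm k 2,
    Nat.card_eq_fintype_card, ZMod.card_units_eq_totient]

theorem card_borel_orbit_F1_pair_general (p : ℕ) [Fact p.Prime] (n : ℕ) [NeZero n]
    (u : ZMod (p ^ n)) (hu : IsUnit u) (k : ℕ) (hk0 : 0 < k) :
    (n - k ≤ k →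
      Nat.card (MulAction.orbit (Gamma0 (ZMod (p ^ n)))
          (⟨![(1 : ZMod (p ^ n)), u * (p : ZMod (p ^ n)) ^ k],
            isUnimodular_pair_left isUnit_one⟩ : F1 (ZMod (p ^ n))))
        = Nat.totient (p ^ n)) ∧
    (k < n - k →
      Nat.card (MulAction.orbit (Gamma0 (ZMod (p ^ n)))
          (⟨![(1 : ZMod (p ^ n)), u * (p : ZMod (p ^ n)) ^ k],
            isUnimodular_pair_left isUnit_one⟩ : F1 (ZMod (p ^ n))))
        = Nat.totient (p ^ n) * p ^ (n - 2 * k)) := by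
  have hcard := ZMod.card_orbit_one_pair_prime_pow p n hu hk0
  refine ⟨fun hnk => ?_, fun _ => hcard⟩
  rw [hcard, Nat.sub_eq_zero_of_le (by omega), pow_zero, mul_one]

/-- For an odd prime `p`, `n ≥ 1`, a unit `u` and `0 < k < n`: the `Γ₀(ℤ/pⁿℤ)`-orbit of
the unimodular pair `(1, u·p^k)` has exactly `φ(pⁿ)` elements if `n - k ≤ k`, and
`φ(pⁿ)·p^(n-2k)` elements if `k < n - k`. -/
theorem card_borel_orbit_F1_pair (p : ℕ) [Fact p.Prime] (hp2 : p ≠ 2) (n : ℕ) [NeZero n]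
    (u : ZMod (p ^ n)) (hu : IsUnit u) (k : ℕ) (hk0 : 0 < k) (hkn : k < n) :
    (n - k ≤ k →
      Nat.card (MulAction.orbit (Gamma0 (ZMod (p ^ n)))
          (⟨![(1 : ZMod (p ^ n)), u * (p : ZMod (p ^ n)) ^ k],
            isUnimodular_pair_left isUnit_one⟩ : F1 (ZMod (p ^ n))))
        = Nat.totient (p ^ n)) ∧
    (k < n - k →
      Nat.card (MulAction.orbit (Gamma0 (ZMod (p ^ n)))
          (⟨![(1 : ZMod (p ^ n)), u * (p : ZMod (p ^ n)) ^ k],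
            isUnimodular_pair_left isUnit_one⟩ : F1 (ZMod (p ^ n))))
        = Nat.totient (p ^ n) * p ^ (n - 2 * k)) :=
  card_borel_orbit_F1_pair_general p n u hu k hk0
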